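/- Let y, y₁, y₂, y₃ : I → ℝ be differentiable functions on an interval I all satisfying the same Riccati equation u' = a + b·u - c·u² (with constants a, b, c ∈ ℝ), and assume y(t) ≠ y₂(t) and y₁(t) ≠ y₃(t) for all t ∈ I. Then the cross-ratio K(t) = ((y(t) - y₁(t))(y₂(t) - y₃(t))) / ((y(t) - y₂(t))(y₁(t) - y₃(t))) has derivative zero, hence is constant on I. -/

import Mathlib

/-!
Along solutions of `u' = a + b u - c u²` every difference `yᵢ - yⱼ` has logarithmic derivative
`b - c (yᵢ + yⱼ)`. The numerator `(y - y₁)(y₂ - y₃)` and the denominator `(y - y₂)(y₁ - y₃)` of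
the cross-ratio therefore share the logarithmic derivative `2b - c (y + y₁ + y₂ + y₃)`, so their
quotient has derivative zero, and it is constant on the convex set `I` by the mean value inequality.
-/

lemma riccati_sub_riccati (a b c u v : ℝ) :
    (a + b * u - c * u ^ 2) - (a + b * v - c * v ^ 2) = (u - v) * (b - c * (u + v)) := by
  ring

lemma HasDerivAt.fun_sub_of_riccati {a b c t : ℝ} {y z : ℝ → ℝ}
    (hy : HasDerivAt y (a + b * y t - c * y t ^ 2) t)
    (hz : HasDerivAt z (a + b * z t - c * z t ^ 2) t) :
    HasDerivAt (fun s => y s - z s) ((y t - z t) * (b - c * (y t + z t))) t :=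
  riccati_sub_riccati a b c (y t) (z t) ▸ hy.sub hz

lemma HasDerivAt.fun_mul_of_logDeriv {f g : ℝ → ℝ} {p q t : ℝ}
    (hf : HasDerivAt f (f t * p) t) (hg : HasDerivAt g (g t * q) t) :
    HasDerivAt (fun s => f s * g s) (f t * g t * (p + q)) t :=
  (hf.fun_mul hg).congr_deriv (by ring)

lemma HasDerivAt.fun_div_eq_zero_of_logDeriv_eq {f g : ℝ → ℝ} {p t : ℝ}
    (hf : HasDerivAt f (f t * p) t) (hg : HasDerivAt g (g t * p) t) (hgt : g t ≠ 0) :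
    HasDerivAt (fun s => f s / g s) 0 t :=
  (hf.fun_div hg hgt).congr_deriv (by ring)

lemma Convex.eq_of_hasDerivAt_zero {I : Set ℝ} (hI : Convex ℝ I) {f : ℝ → ℝ}
    (hf : ∀ t ∈ I, HasDerivAt f 0 t) {s t : ℝ} (hs : s ∈ I) (ht : t ∈ I) : f s = f t := by
  have h := hI.norm_image_sub_le_of_norm_hasDerivWithin_le
    (fun x hx => (hf x hx).hasDerivWithinAt) (C := 0) (by simp) ht hs
  rw [zero_mul, norm_le_zero_iff, sub_eq_zero] at h
  exact h

theorem riccati_cross_ratio_constant (a b c : ℝ) (I : Set ℝ) (hI : Convex ℝ I)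
    (y y₁ y₂ y₃ : ℝ → ℝ)
    (hy : ∀ t ∈ I, HasDerivAt y (a + b * y t - c * y t ^ 2) t)
    (hy₁ : ∀ t ∈ I, HasDerivAt y₁ (a + b * y₁ t - c * y₁ t ^ 2) t)
    (hy₂ : ∀ t ∈ I, HasDerivAt y₂ (a + b * y₂ t - c * y₂ t ^ 2) t)
    (hy₃ : ∀ t ∈ I, HasDerivAt y₃ (a + b * y₃ t - c * y₃ t ^ 2) t)
    (hne₁ : ∀ t ∈ I, y t ≠ y₂ t) (hne₂ : ∀ t ∈ I, y₁ t ≠ y₃ t) :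
    let K : ℝ → ℝ := fun t =>
      ((y t - y₁ t) * (y₂ t - y₃ t)) / ((y t - y₂ t) * (y₁ t - y₃ t))
    (∀ t ∈ I, HasDerivAt K 0 t) ∧ (∀ s ∈ I, ∀ t ∈ I, K s = K t) := by
  intro K
  have hK : ∀ t ∈ I, HasDerivAt K 0 t := by
    intro t ht
    have hnum := ((hy t ht).fun_sub_of_riccati (hy₁ t ht)).fun_mul_of_logDeriv
      ((hy₂ t ht).fun_sub_of_riccati (hy₃ t ht))
    have hden := ((hy t ht).fun_sub_of_riccati (hy₂ t ht)).fun_mul_of_logDeriv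
      ((hy₁ t ht).fun_sub_of_riccati (hy₃ t ht))
    have hlog : b - c * (y t + y₂ t) + (b - c * (y₁ t + y₃ t)) =
        b - c * (y t + y₁ t) + (b - c * (y₂ t + y₃ t)) := by ring
    rw [hlog] at hden
    exact hnum.fun_div_eq_zero_of_logDeriv_eq hden
      (mul_ne_zero (sub_ne_zero.2 (hne₁ t ht)) (sub_ne_zero.2 (hne₂ t ht)))
  exact ⟨hK, fun s hs t ht => hI.eq_of_hasDerivAt_zero hK hs ht⟩
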